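/- Let p >= 3 and suppose Player m (1 <= m <= p) has a winning strategy in the p-player Tribonacci game on n. Then no play consistent with a winning strategy of Player m contains the following three consecutive moves: 1 and 1 replaced by 2, then 1 and 1 replaced by 2, then 2 and 2 replaced by 4, unless Player m is the player who makes the second of these three moves. -/
import Mathlib


/-- The Tribonacci numbers: `T 1 = 1`, `T 2 = 2`, `T 3 = 4`,
`T (i+1) = T i + T (i-1) + T (i-2)` for `i ≥ 3`. -/
def trib : ℕ → ℕ
  | 0 => 0
  | 1 => 1
  | 2 => 2
  | 3 => 4
  | (i + 4) => trib (i + 3) + trib (i + 2) + trib (i + 1)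

/-- A legal move of the Tribonacci game, as a relation between the position
before and the position after the move (positions are multisets of naturals). -/
def TribMove (A B : Multiset ℕ) : Prop :=
  (∃ i, 3 ≤ i ∧ ({trib (i - 2), trib (i - 1), trib i} : Multiset ℕ) ≤ A ∧
      B = A - {trib (i - 2), trib (i - 1), trib i} + {trib (i + 1)}) ∨
  (({1, 1, 2} : Multiset ℕ) ≤ A ∧ B = A - {1, 1, 2} + {4}) ∨
  (({1, 1} : Multiset ℕ) ≤ A ∧ B = A - {1, 1} + {2}) ∨
  (({2, 2} : Multiset ℕ) ≤ A ∧ B = A - {2, 2} + {4}) ∨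
  (({4, 4} : Multiset ℕ) ≤ A ∧ B = A - {4, 4} + {7, 1}) ∨
  (∃ i, 3 < i ∧ ({trib i, trib i} : Multiset ℕ) ≤ A ∧
      B = A - {trib i, trib i} + {trib (i + 1), trib (i - 3)})

/-- A position is terminal when no legal move remains. -/
def Terminal (Move : Multiset ℕ → Multiset ℕ → Prop) (pos : Multiset ℕ) : Prop :=
  ∀ B, ¬ Move pos B

/-- `AllianceWins Move p team t pos`: in the `p`-player game with move relation `Move`,
where players `1, …, p` move cyclically (the mover of the `t`-th move, counting from `t = 0`,
is player `t % p + 1`) and the side making the last legal move wins, the alliance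
(set of players) `team` can guarantee, from position `pos` with `t` moves already made,
that one of its members makes the last move, no matter how the other players play. -/
inductive AllianceWins (Move : Multiset ℕ → Multiset ℕ → Prop) (p : ℕ) (team : ℕ → Prop) :
    ℕ → Multiset ℕ → Prop
  | endMove (t : ℕ) (pos B : Multiset ℕ) (hturn : team (t % p + 1)) (hmove : Move pos B)
      (hterm : Terminal Move B) : AllianceWins Move p team t pos
  | contMove (t : ℕ) (pos B : Multiset ℕ) (hturn : team (t % p + 1)) (hmove : Move pos B)
      (hwin : AllianceWins Move p team (t + 1) B) : AllianceWins Move p team t pos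
  | oppMove (t : ℕ) (pos : Multiset ℕ) (hturn : ¬ team (t % p + 1))
      (hex : ∃ B, Move pos B)
      (hall : ∀ B, Move pos B → AllianceWins Move p team (t + 1) B) :
      AllianceWins Move p team t pos

/-- Player `m` has a winning strategy in the `p`-player game on `n`
(played from `n` copies of `1`, with player 1 moving first). -/
def PlayerWins (Move : Multiset ℕ → Multiset ℕ → Prop) (p m n : ℕ) : Prop :=
  AllianceWins Move p (fun q => q = m) 0 (Multiset.replicate n 1)

/-- `Consistent σ p m xs`: in the sequence of positions `xs`, whenever it is
player `m`'s turn (the `t`-th move, `t % p + 1 = m`), the next position is the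
one prescribed by the strategy `σ` (a function of the move number and the
current position). -/
def Consistent (σ : ℕ → Multiset ℕ → Multiset ℕ) (p m : ℕ) (xs : List (Multiset ℕ)) : Prop :=
  ∀ t, t + 1 < xs.length → t % p + 1 = m →
    xs.getD (t + 1) 0 = σ t (xs.getD t 0)

/-- A (possibly partial) play of the game from the position `start`:
a nonempty sequence of positions beginning at `start` in which every
consecutive pair is related by a legal move. -/
def IsPlay (Move : Multiset ℕ → Multiset ℕ → Prop) (start : Multiset ℕ)
    (xs : List (Multiset ℕ)) : Prop :=
  xs.head? = some start ∧ xs.Chain' Move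

/-- A complete play of the game from `start`: a play whose last position is terminal. -/
def IsCompletePlay (Move : Multiset ℕ → Multiset ℕ → Prop) (start : Multiset ℕ)
    (xs : List (Multiset ℕ)) : Prop :=
  IsPlay Move start xs ∧ ∃ y, xs.getLast? = some y ∧ Terminal Move y

/-- `σ` is a winning strategy for player `m` in the `p`-player game from `start`:
along every play consistent with `σ`, whenever it is `m`'s turn and a legal move exists,
`σ` prescribes a legal move; and every complete play consistent with `σ` ends with a
move by player `m` (a play `x₀, …, x_L` has `L = xs.length - 1` moves, the last being
move number `xs.length - 2`, made by player `(xs.length - 2) % p + 1`). -/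
def IsWinningStrategy (Move : Multiset ℕ → Multiset ℕ → Prop) (p m : ℕ)
    (start : Multiset ℕ) (σ : ℕ → Multiset ℕ → Multiset ℕ) : Prop :=
  (∀ xs, IsPlay Move start xs → Consistent σ p m xs →
    ∀ y, xs.getLast? = some y → (xs.length - 1) % p + 1 = m → (∃ B, Move y B) →
      Move y (σ (xs.length - 1) y)) ∧
  (∀ xs, IsCompletePlay Move start xs → Consistent σ p m xs →
    (xs.length - 2) % p + 1 = m)

theorem trib_succ4 (n : ℕ) : trib (n+4) = trib (n+3) + trib (n+2) + trib (n+1) := rfl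
theorem trib_pos : ∀ n, 0 < trib (n+1)
  | 0 => by decide
  | 1 => by decide
  | 2 => by decide
  | n+3 => by
      have h := trib_pos n
      rw [show n+3+1 = n+4 by omega, trib_succ4]
      omega
theorem trib_lt_succ : ∀ n, trib n < trib (n+1)
  | 0 => by decide
  | 1 => by decide
  | 2 => by decide
  | n+3 => by
      have h1 := trib_pos n
      rw [trib_succ4]
      omega
theorem trib_strictMono : StrictMono trib := strictMono_nat_of_lt_succ trib_lt_succ
noncomputable def wt (x : ℕ) : ℕ := sInf {j | x ≤ trib j} + 1
theorem wt_trib (i : ℕ) : wt (trib i) = i + 1 := by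
  unfold wt
  congr 1
  have hmem : i ∈ {j | trib i ≤ trib j} := by simp
  refine le_antisymm (Nat.sInf_le hmem) ?_
  have hmem' := Nat.sInf_mem (⟨i, hmem⟩ : Set.Nonempty {j | trib i ≤ trib j})
  exact trib_strictMono.le_iff_le.mp hmem'
noncomputable def mu (A : Multiset ℕ) : ℕ := (A.map wt).sum
theorem mu_add (A B : Multiset ℕ) : mu (A + B) = mu A + mu B := by simp [mu]
theorem mu_step {A S R : Multiset ℕ} (hS : S ≤ A) (h : mu R < mu S) :
    mu (A - S + R) < mu A := by
  obtain ⟨C, rfl⟩ := Multiset.le_iff_exists_add.mp hS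
  rw [add_tsub_cancel_left, mu_add, mu_add]
  omega
theorem wt_one : wt 1 = 2 := wt_trib 1
theorem wt_two : wt 2 = 3 := wt_trib 2
theorem wt_four : wt 4 = 4 := wt_trib 3
theorem wt_seven : wt 7 = 5 := wt_trib 4
theorem mu_pair (a b : ℕ) : mu {a, b} = wt a + wt b := by
  simp [mu, Multiset.insert_eq_cons]
theorem mu_triple (a b c : ℕ) : mu {a, b, c} = wt a + wt b + wt c := by
  simp [mu, Multiset.insert_eq_cons]; ring
theorem mu_single (a : ℕ) : mu {a} = wt a := by simp [mu]
theorem mu_decrease {A B : Multiset ℕ} (h : TribMove A B) : mu B < mu A := by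
  rcases h with ⟨i, hi, hle, rfl⟩ | ⟨hle, rfl⟩ | ⟨hle, rfl⟩ | ⟨hle, rfl⟩ | ⟨hle, rfl⟩ |
    ⟨i, hi, hle, rfl⟩
  · refine mu_step hle ?_
    obtain ⟨k, rfl⟩ : ∃ k, i = k + 3 := ⟨i - 3, by omega⟩
    rw [mu_single, mu_triple, show k+3-2 = k+1 by omega, show k+3-1 = k+2 by omega,
      wt_trib, wt_trib, wt_trib, wt_trib]
    omega
  · refine mu_step hle ?_
    rw [mu_single, mu_triple, wt_one, wt_two, wt_four]
    omega
  · refine mu_step hle ?_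
    rw [mu_single, mu_pair, wt_one, wt_two]
    omega
  · refine mu_step hle ?_
    rw [mu_single, mu_pair, wt_two, wt_four]
    omega
  · refine mu_step hle ?_
    rw [mu_pair, mu_pair, wt_one, wt_four, wt_seven]
    omega
  · refine mu_step hle ?_
    obtain ⟨k, rfl⟩ : ∃ k, i = k + 4 := ⟨i - 4, by omega⟩
    rw [mu_pair, mu_pair, show k+4-3 = k+1 by omega, wt_trib, wt_trib, wt_trib]
    omega
def Reach (σ : ℕ → Multiset ℕ → Multiset ℕ) (p m : ℕ) (start : Multiset ℕ)
    (s : ℕ) (Y : Multiset ℕ) : Prop :=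
  ∃ ys : List (Multiset ℕ), IsPlay TribMove start ys ∧ Consistent σ p m ys ∧
    ys.length = s + 1 ∧ ys.getLast? = some Y
theorem getD_of_getLast? {ys : List (Multiset ℕ)} {s : ℕ} {Y : Multiset ℕ}
    (hlen : ys.length = s + 1) (hlast : ys.getLast? = some Y) : ys.getD s 0 = Y := by
  rw [List.getLast?_eq_getElem?] at hlast
  rw [List.getD_eq_getElem?_getD, hlen] at *
  simp only [Nat.add_sub_cancel] at hlast
  rw [hlast]
  rfl
theorem reach_extend {σ : ℕ → Multiset ℕ → Multiset ℕ} {p m : ℕ} {start : Multiset ℕ}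
    {s : ℕ} {Y B : Multiset ℕ}
    (h : Reach σ p m start s Y) (hmove : TribMove Y B)
    (hσc : s % p + 1 = m → B = σ s Y) : Reach σ p m start (s+1) B := by
  obtain ⟨ys, ⟨hhead, hchain⟩, hcons, hlen, hlast⟩ := h
  have hne : ys ≠ [] := by intro h; rw [h] at hlen; simp at hlen
  have hgetD : ys.getD s 0 = Y := getD_of_getLast? hlen hlast
  refine ⟨ys ++ [B], ⟨?_, ?_⟩, ?_, by simp [hlen], by simp⟩
  · cases ys with
    | nil => exact absurd rfl hne
    | cons a l => simpa using hhead
  · refine List.isChain_append.mpr ⟨hchain, List.isChain_singleton _, ?_⟩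
    intro x hx y hy
    simp only [List.head?_cons, Option.mem_def, Option.some.injEq] at hy
    rw [Option.mem_def, hlast, Option.some.injEq] at hx
    subst hx; subst hy
    exact hmove
  · intro u hu hum
    simp only [List.length_append, List.length_singleton, hlen] at hu
    rcases Nat.lt_or_ge (u + 1) (s + 1) with hlt | hge
    · rw [List.getD_append _ _ _ _ (by omega), List.getD_append _ _ _ _ (by omega)]
      exact hcons u (by omega) hum
    · have hu1 : u = s := by omega
      subst hu1
      have e2 : (ys ++ [B]).getD u 0 = Y := by
        rw [List.getD_append _ _ _ u (by omega)]; exact hgetD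
      have e1 : (ys ++ [B]).getD (u + 1) 0 = B := by
        rw [List.getD_eq_getElem?_getD, List.getElem?_append_right (by omega), hlen]
        simp
      rw [e1, e2]
      exact hσc hum
theorem reach_prefix {σ : ℕ → Multiset ℕ → Multiset ℕ} {p m : ℕ} {start : Multiset ℕ}
    {xs : List (Multiset ℕ)}
    (hplay : IsPlay TribMove start xs) (hcons : Consistent σ p m xs)
    {k : ℕ} (hk : k < xs.length) :
    Reach σ p m start k (xs.getD k 0) := by
  refine ⟨xs.take (k+1), ⟨?_, hplay.2.take _⟩, ?_, ?_, ?_⟩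
  · cases xs with
    | nil => simp at hk
    | cons a l => simpa using hplay.1
  · intro u hu hum
    rw [List.length_take] at hu
    have hu' : u + 1 < k + 1 := lt_of_lt_of_le hu (min_le_left _ _)
    rw [List.getD_eq_getElem?_getD, List.getD_eq_getElem?_getD,
      List.getElem?_take, if_pos (show u + 1 < k + 1 by omega),
      List.getElem?_take, if_pos (show u < k + 1 by omega)]
    have h := hcons u (by omega) hum
    rw [List.getD_eq_getElem?_getD, List.getD_eq_getElem?_getD] at h
    exact h
  · rw [List.length_take]; omega
  · rw [List.getLast?_eq_getElem?, List.length_take]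
    have hmin : min (k+1) xs.length = k + 1 := by omega
    rw [hmin]
    simp only [Nat.add_sub_cancel]
    rw [List.getElem?_take, if_pos (show k < k + 1 by omega)]
    rw [List.getD_eq_getElem?_getD]
    rw [List.getElem?_eq_getElem hk]
    rfl
theorem reach_clause2 {σ : ℕ → Multiset ℕ → Multiset ℕ} {p m : ℕ} {start : Multiset ℕ}
    {s : ℕ} {Y : Multiset ℕ}
    (hσ : IsWinningStrategy TribMove p m start σ)
    (h : Reach σ p m start s Y) (hterm : Terminal TribMove Y) :
    (s + 1 - 2) % p + 1 = m := by
  obtain ⟨ys, hplay, hcons, hlen, hlast⟩ := h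
  have := hσ.2 ys ⟨hplay, Y, hlast, hterm⟩ hcons
  rwa [hlen] at this
theorem reach_clause1 {σ : ℕ → Multiset ℕ → Multiset ℕ} {p m : ℕ} {start : Multiset ℕ}
    {s : ℕ} {Y : Multiset ℕ}
    (hσ : IsWinningStrategy TribMove p m start σ)
    (h : Reach σ p m start s Y) (hm : s % p + 1 = m)
    (hex : ∃ B, TribMove Y B) : TribMove Y (σ s Y) := by
  obtain ⟨ys, hplay, hcons, hlen, hlast⟩ := h
  have := hσ.1 ys hplay hcons Y hlast (by rw [hlen, Nat.add_sub_cancel]; exact hm) hex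
  rwa [hlen, Nat.add_sub_cancel] at this
theorem mod_ne {p s : ℕ} (hp : 2 ≤ p) : ¬(s % p = (s+1) % p) := by
  intro h
  have hd : p ∣ (s+1) - s := (Nat.modEq_iff_dvd' (Nat.le_succ s)).mp h
  rw [show s + 1 - s = 1 by omega] at hd
  have := Nat.le_of_dvd (by omega) hd
  omega
theorem key_no_double {σ : ℕ → Multiset ℕ → Multiset ℕ} {p m : ℕ} {start : Multiset ℕ}
    (hσ : IsWinningStrategy TribMove p m start σ) (hp : 2 ≤ p) :
    ∀ K (Y : Multiset ℕ) (s : ℕ), mu Y < K → 1 ≤ s →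
      Reach σ p m start s Y → Reach σ p m start (s+1) Y → False := by
  intro K
  induction K with
  | zero => intro Y s h; omega
  | succ K ih =>
    intro Y s hK hs r1 r2
    by_cases hterm : Terminal TribMove Y
    · have e1 := reach_clause2 hσ r1 hterm
      have e2 := reach_clause2 hσ r2 hterm
      have h1 : s + 1 - 2 = s - 1 := by omega
      have h2 : s + 1 + 1 - 2 = s := by omega
      rw [h1] at e1
      rw [h2] at e2
      refine mod_ne hp (s := s - 1) ?_
      rw [show s - 1 + 1 = s by omega]
      omega
    · have hex : ∃ B, TribMove Y B := by
        by_contra hne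
        push_neg at hne
        exact hterm hne
      by_cases ha : s % p + 1 = m
      · have hb : ¬((s+1) % p + 1 = m) := fun hb' => mod_ne (p := p) (s := s) hp (by omega)
        have hmv : TribMove Y (σ s Y) := reach_clause1 hσ r1 ha hex
        have r1' := reach_extend r1 hmv (fun _ => rfl)
        have r2' := reach_extend r2 hmv (fun hc => absurd hc hb)
        exact ih _ (s+1) (by have := mu_decrease hmv; omega) (by omega) r1' r2'
      · by_cases hb : (s+1) % p + 1 = m
        · have hmv : TribMove Y (σ (s+1) Y) := reach_clause1 hσ r2 hb hex
          have r1' := reach_extend r1 hmv (fun hc => absurd hc ha)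
          have r2' := reach_extend r2 hmv (fun _ => rfl)
          exact ih _ (s+1) (by have := mu_decrease hmv; omega) (by omega) r1' r2'
        · obtain ⟨B, hmv⟩ := hex
          have r1' := reach_extend r1 hmv (fun hc => absurd hc ha)
          have r2' := reach_extend r2 hmv (fun hc => absurd hc hb)
          exact ih B (s+1) (by have := mu_decrease hmv; omega) (by omega) r1' r2'

/-- if `p ≥ 3` and player `m` (`1 ≤ m ≤ p`) has a winning strategy `σ`
in the `p`-player Tribonacci game on `n`, then no complete play consistent with `σ`
contains the three consecutive moves `1 ∧ 1 → 2`, `1 ∧ 1 → 2`, `2 ∧ 2 → 4`, unless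
player `m` is the one who makes the second of those three moves. -/
theorem winning_path_avoids_steal_pattern_tribonacci (p m n : ℕ) (hp : 3 ≤ p) (hm1 : 1 ≤ m) (hmp : m ≤ p)
    (σ : ℕ → Multiset ℕ → Multiset ℕ)
    (hσ : IsWinningStrategy TribMove p m (Multiset.replicate n 1) σ)
    (xs : List (Multiset ℕ))
    (hplay : IsCompletePlay TribMove (Multiset.replicate n 1) xs)
    (hcons : Consistent σ p m xs)
    (t : ℕ) (ht : t + 3 < xs.length)
    (h1 : ({1, 1} : Multiset ℕ) ≤ xs.getD t 0 ∧
      xs.getD (t + 1) 0 = xs.getD t 0 - {1, 1} + {2})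
    (h2 : ({1, 1} : Multiset ℕ) ≤ xs.getD (t + 1) 0 ∧
      xs.getD (t + 2) 0 = xs.getD (t + 1) 0 - {1, 1} + {2})
    (h3 : ({2, 2} : Multiset ℕ) ≤ xs.getD (t + 2) 0 ∧
      xs.getD (t + 3) 0 = xs.getD (t + 2) 0 - {2, 2} + {4}) :
    (t + 1) % p + 1 = m := by
  by_contra hq
  obtain ⟨h11, hx2⟩ := h2
  obtain ⟨h22, hx3⟩ := h3
  set x1 := xs.getD (t+1) 0 with hx1def
  set x2 := xs.getD (t+2) 0 with hx2def
  set x3 := xs.getD (t+3) 0 with hx3def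
  have r1 : Reach σ p m (Multiset.replicate n 1) (t+1) x1 :=
    reach_prefix hplay.1 hcons (by omega)
  have r2 : Reach σ p m (Multiset.replicate n 1) (t+2) x2 :=
    reach_prefix hplay.1 hcons (by omega)
  have hc1 : 2 ≤ x1.count 1 := by
    have := Multiset.le_iff_count.mp h11 1
    simpa [Multiset.insert_eq_cons] using this
  have hc2 : 1 ≤ x1.count 2 := by
    have := Multiset.le_iff_count.mp h22 2
    rw [hx2] at this
    simp [Multiset.insert_eq_cons, Multiset.count_cons, Multiset.count_singleton] at this
    omega
  have hle : ({1, 1, 2} : Multiset ℕ) ≤ x1 := by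
    rw [Multiset.le_iff_count]
    intro a
    by_cases ha1 : a = 1
    · subst ha1
      simpa [Multiset.insert_eq_cons, Multiset.count_cons, Multiset.count_singleton] using hc1
    · by_cases ha2 : a = 2
      · subst ha2
        simpa [Multiset.insert_eq_cons, Multiset.count_cons, Multiset.count_singleton] using hc2
      · simp [Multiset.insert_eq_cons, Multiset.count_cons, Multiset.count_singleton, ha1, ha2]
  have hXeq : x3 = x1 - {1, 1, 2} + {4} := by
    rw [hx3, hx2]
    ext a
    simp only [Multiset.count_add, Multiset.count_sub, Multiset.insert_eq_cons,
      Multiset.count_cons, Multiset.count_singleton]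
    by_cases ha1 : a = 1
    · subst ha1; simp
    · by_cases ha2 : a = 2
      · subst ha2; simp
      · by_cases ha4 : a = 4
        · subst ha4; simp
        · simp [ha1, ha2, ha4]
  have hsteal : TribMove x1 x3 := Or.inr (Or.inl ⟨hle, hXeq⟩)
  have hmove2 : TribMove x2 x3 := Or.inr (Or.inr (Or.inr (Or.inl ⟨h22, hx3⟩)))
  have rX1 : Reach σ p m (Multiset.replicate n 1) (t+2) x3 :=
    reach_extend r1 hsteal (fun hc => absurd hc hq)
  have rX2 : Reach σ p m (Multiset.replicate n 1) (t+3) x3 :=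
    reach_extend r2 hmove2 (fun hc => hcons (t+2) (by omega) hc)
  exact key_no_double hσ (by omega) (mu x3 + 1) x3 (t+2) (by omega) (by omega) rX1 rX2
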